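/- Let a₁,…,a_n be distinct reals (n ≥ 1), ε₁,…,ε_n ∈ {-1,1}, Δᵢ(a) = εᵢ(a-aᵢ), let I ⊆ ℝ be an open interval on which Δᵢ > 0 for all i, let F̂(a) = ∏_{i=1}^n (a-aᵢ), and let ν, ξ₁,…,ξ_n ∈ ℝ. Then the function x(a) = (ν/2) a + ∑_{i=1}^n ξᵢ Δᵢ(a)^{-1/2} satisfies (Op_n[F̂]x)(a) = (n + 1/2) ν a − ν σ₁ for all a ∈ I, where σ₁ = ∑_{i=1}^n aᵢ; in particular x solves the weakly inhomogeneous linear ODE Op_n[F̂]x = (n + 1/2)ν a + β with the constant β = −ν σ₁. -/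

import Mathlib

/-!
`Op n F` is linear in `h`, so the summands of `x` can be treated separately.
For `h(a) = (ε (a - b))^{-1/2}` one has `h^{(s)}(a) = (1/2)_s h(a) / (b - a)^s`, so the
Pochhammer factors cancel and `(b - a)^n (Op_n[F] h)(a)` is `h(a)` times the Taylor expansion
of `F` at `a` evaluated at `b`, i.e. `h(a) F(b)`, which vanishes at every root `b = aᵢ` of `F̂`.
On the linear summand only `s = 0, 1` contribute, and they pick out the two top Taylor
coefficients of `F̂` at `a`, namely `1` and `n a - σ₁`.
-/

open Polynomial

/-- The Pochhammer symbol `(1/2)_s`. -/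
noncomputable def poch (s : ℕ) : ℝ := (ascPochhammer ℝ s).eval (1/2 : ℝ)

/-- The operator `Op_n[F]` acting on `h`:
`(Op_n[F]h)(a) = ∑_{s=0}^{n} F^{(n-s)}(a)/(n-s)! · h^{(s)}(a)/(1/2)_s`. -/
noncomputable def Op (n : ℕ) (F h : ℝ → ℝ) (a : ℝ) : ℝ :=
  ∑ s ∈ Finset.range (n + 1),
    iteratedDeriv (n - s) F a / (Nat.factorial (n - s) : ℝ) *
      (iteratedDeriv s h a / poch s)

open Finset

namespace Polynomial

theorem iteratedDeriv_eval {𝕜 : Type*} [NontriviallyNormedField 𝕜] (p : 𝕜[X]) (k : ℕ) :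
    iteratedDeriv k (fun u => p.eval u) = fun u => (derivative^[k] p).eval u := by
  induction k generalizing p with
  | zero => simp
  | succ k ih =>
    have hderiv : _root_.deriv (fun u => p.eval u) = fun u => (derivative p).eval u := by
      ext u
      exact p.deriv
    rw [iteratedDeriv_succ', Function.iterate_succ_apply, ← ih, hderiv]

theorem iteratedDeriv_eval_eq_factorial_mul_taylor_coeff {𝕜 : Type*} [NontriviallyNormedField 𝕜]
    (p : 𝕜[X]) (k : ℕ) (t : 𝕜) :
    iteratedDeriv k (fun u => p.eval u) t = k.factorial * (taylor t p).coeff k := by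
  rw [iteratedDeriv_eval, ← factorial_smul_hasseDeriv, LinearMap.smul_apply, taylor_coeff]
  simp

theorem sum_range_taylor_coeff_mul_pow {R : Type*} [CommSemiring R] {p : R[X]} {n : ℕ}
    (hp : p.natDegree ≤ n) (t y : R) :
    ∑ k ∈ range (n + 1), (taylor t p).coeff k * y ^ k = p.eval (y + t) := by
  rw [← taylor_eval, eval_eq_sum_range' (n := n + 1) (by rw [natDegree_taylor]; omega)]

theorem taylor_prod_X_sub_C {R ι : Type*} [CommRing R] (s : Finset ι) (a : ι → R) (t : R) :
    taylor t (∏ i ∈ s, (X - C (a i))) = ∏ i ∈ s, (X - C (a i - t)) := by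
  rw [show taylor t = ⇑(taylorAlgHom t) from rfl, map_prod]
  refine prod_congr rfl fun i _ => ?_
  rw [taylorAlgHom_apply, map_sub, taylor_X, taylor_C, C_sub]
  ring

theorem coeff_taylor_prod_X_sub_C_card {R ι : Type*} [CommRing R] [Nontrivial R]
    (s : Finset ι) (a : ι → R) (t : R) : (taylor t (∏ i ∈ s, (X - C (a i)))).coeff #s = 1 := by
  rw [taylor_prod_X_sub_C, ← natDegree_finsetProd_X_sub_C_eq_card s fun i => a i - t]
  exact (monic_prod_X_sub_C _ s).coeff_natDegree

theorem coeff_taylor_prod_X_sub_C_card_pred {R ι : Type*} [CommRing R] (s : Finset ι) (a : ι → R)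
    (t : R) (hs : 0 < #s) :
    (taylor t (∏ i ∈ s, (X - C (a i)))).coeff (#s - 1) = #s * t - ∑ i ∈ s, a i := by
  rw [taylor_prod_X_sub_C, prod_X_sub_C_coeff_card_pred s _ hs, sum_sub_distrib, sum_const,
    nsmul_eq_mul]
  ring

end Polynomial

section Op

variable {n : ℕ} {F f g : ℝ → ℝ} {t : ℝ}

lemma poch_ne_zero (s : ℕ) : poch s ≠ 0 :=
  (ascPochhammer_pos s _ one_half_pos).ne'

lemma Op_fun_add (hf : ContDiffAt ℝ n f t) (hg : ContDiffAt ℝ n g t) :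
    Op n F (fun u => f u + g u) t = Op n F f t + Op n F g t := by
  simp only [Op, ← sum_add_distrib, ← mul_add, ← add_div]
  refine sum_congr rfl fun s hs => ?_
  have hsn : (s : WithTop ℕ∞) ≤ n := by exact_mod_cast Nat.lt_succ_iff.mp (mem_range.mp hs)
  rw [iteratedDeriv_fun_add (hf.of_le hsn) (hg.of_le hsn)]

lemma Op_fun_sum {ι : Type*} (I : Finset ι) {f : ι → ℝ → ℝ}
    (hf : ∀ i ∈ I, ContDiffAt ℝ n (f i) t) :
    Op n F (fun u => ∑ i ∈ I, f i u) t = ∑ i ∈ I, Op n F (f i) t := by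
  simp only [Op]
  rw [sum_comm]
  refine sum_congr rfl fun s hs => ?_
  have hsn : (s : WithTop ℕ∞) ≤ n := by exact_mod_cast Nat.lt_succ_iff.mp (mem_range.mp hs)
  rw [iteratedDeriv_fun_sum fun i hi => (hf i hi).of_le hsn, sum_div, mul_sum]

lemma Op_const_mul (c : ℝ) (f : ℝ → ℝ) :
    Op n F (fun u => c * f u) t = c * Op n F f t := by
  simp only [Op, iteratedDeriv_const_mul_field, mul_sum]
  exact sum_congr rfl fun _ _ => by ring

lemma Op_polynomial_eval (p : ℝ[X]) (h : ℝ → ℝ) :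
    Op n (fun u => p.eval u) h t =
      ∑ s ∈ range (n + 1), (taylor t p).coeff (n - s) * (iteratedDeriv s h t / poch s) := by
  refine sum_congr rfl fun s _ => ?_
  rw [iteratedDeriv_eval_eq_factorial_mul_taylor_coeff,
    mul_div_cancel_left₀ _ (Nat.cast_ne_zero.mpr (Nat.factorial_ne_zero _))]

lemma Op_polynomial_eval_const_mul_id (p : ℝ[X]) (m : ℕ) (c : ℝ) :
    Op (m + 1) (fun u => p.eval u) (fun u => c * u) t =
      c * ((taylor t p).coeff (m + 1) * t + 2 * (taylor t p).coeff m) := by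
  have hderiv : deriv (fun u => c * u) = fun _ => c := funext fun u => by simp
  have hhigher (s : ℕ) : iteratedDeriv (s + 2) (fun u => c * u) t = 0 := by
    rw [iteratedDeriv_succ', iteratedDeriv_succ', hderiv, deriv_const', iteratedDeriv_const]
    simp
  rw [Op_polynomial_eval, sum_range_succ', sum_range_succ']
  simp only [Nat.reduceSubDiff, hhigher, poch, one_div, zero_div, mul_zero, sum_const_zero,
    zero_add, add_tsub_cancel_right, iteratedDeriv_one, deriv_const_mul_id', ascPochhammer_one,
    eval_X, div_inv_eq_mul, tsub_zero, iteratedDeriv_zero, ascPochhammer_zero, eval_one, div_one]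
  ring

end Op

theorem iteratedDeriv_rpow_neg {ε b α : ℝ} (s : ℕ) {t : ℝ} (ht : 0 < ε * (t - b)) :
    iteratedDeriv s (fun u => (ε * (u - b)) ^ (-α)) t =
      (ascPochhammer ℝ s).eval α * (ε * (t - b)) ^ (-α) / (b - t) ^ s := by
  induction s generalizing t with
  | zero => simp
  | succ s ih =>
    have hopen : IsOpen {u | 0 < ε * (u - b)} := isOpen_lt continuous_const (by fun_prop)
    rw [iteratedDeriv_succ,
      (Filter.eventuallyEq_of_mem (hopen.mem_nhds ht) fun u hu => ih hu).deriv_eq]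
    have hε : ε ≠ 0 := by rintro rfl; simp at ht
    have htb : t - b ≠ 0 := by rintro h; simp [h] at ht
    have hbt : b - t ≠ 0 := by rw [← neg_sub]; exact neg_ne_zero.mpr htb
    have hrpow : HasDerivAt (fun u => (ε * (u - b)) ^ (-α))
        (α * (ε * (t - b)) ^ (-α) / (b - t)) t := by
      have := (((hasDerivAt_id' t).sub_const b).const_mul ε).rpow_const (p := -α) (Or.inl ht.ne')
      convert this using 1
      rw [Real.rpow_sub_one ht.ne']
      field_simp
      ring
    have hpow : HasDerivAt (fun u => (b - u) ^ s) (-(s * (b - t) ^ (s - 1))) t := by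
      simpa using ((hasDerivAt_id' t).const_sub b).fun_pow s
    have hquot := (hrpow.const_mul ((ascPochhammer ℝ s).eval α)).fun_div hpow (pow_ne_zero s hbt)
    have hs : (s : ℝ) * (b - t) ^ (s - 1) * (b - t) = s * (b - t) ^ s := by
      rcases Nat.eq_zero_or_pos s with rfl | hs
      · simp
      · rw [mul_assoc, pow_sub_one_mul hs.ne']
    rw [hquot.deriv, ascPochhammer_succ_eval]
    field_simp
    linear_combination (eval α (ascPochhammer ℝ s) * (b - t) ^ (s + 1)) * hs

theorem Op_polynomial_eval_eq_zero_of_root {p : ℝ[X]} {n : ℕ} (hp : p.natDegree ≤ n) {b t : ℝ}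
    (hb : p.eval b = 0) (hbt : b ≠ t) {h : ℝ → ℝ}
    (hh : ∀ s, iteratedDeriv s h t = poch s * h t / (b - t) ^ s) :
    Op n (fun u => p.eval u) h t = 0 := by
  have hbt' : b - t ≠ 0 := sub_ne_zero.mpr hbt
  rw [← sub_add_cancel b t, ← sum_range_taylor_coeff_mul_pow hp, ← sum_range_reflect] at hb
  simp only [Nat.add_sub_cancel] at hb
  have key : (b - t) ^ n * Op n (fun u => p.eval u) h t =
      h t * ∑ s ∈ range (n + 1), (taylor t p).coeff (n - s) * (b - t) ^ (n - s) := by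
    rw [Op_polynomial_eval, mul_sum, mul_sum]
    refine sum_congr rfl fun s hs => ?_
    rw [hh, pow_sub₀ _ hbt' (Nat.lt_succ_iff.mp (mem_range.mp hs))]
    field_simp [poch_ne_zero s]
  rw [hb, mul_zero] at key
  exact (mul_eq_zero.mp key).resolve_left (pow_ne_zero n hbt')

theorem Op_polynomial_eval_rpow_neg_half_eq_zero_of_root {p : ℝ[X]} {n : ℕ}
    (hp : p.natDegree ≤ n) {ε b t : ℝ} (hb : p.eval b = 0) (ht : 0 < ε * (t - b)) :
    Op n (fun u => p.eval u) (fun u => (ε * (u - b)) ^ (-(1/2) : ℝ)) t = 0 := by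
  refine Op_polynomial_eval_eq_zero_of_root hp hb ?_ fun s => iteratedDeriv_rpow_neg s ht
  rintro rfl
  simp at ht

theorem stmt18_general (n : ℕ) (hn : 1 ≤ n) (a : Fin n → ℝ) (ε : Fin n → ℝ) (I : Set ℝ)
    (hΔ : ∀ i, ∀ t ∈ I, 0 < ε i * (t - a i))
    (ν : ℝ) (ξ : Fin n → ℝ) :
    ∀ t ∈ I,
      Op n (fun u => ∏ i, (u - a i))
        (fun u => ν / 2 * u + ∑ i, ξ i * (ε i * (u - a i)) ^ (-(1/2) : ℝ)) t =
      ((n : ℝ) + 1/2) * ν * t - ν * ∑ i, a i := by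
  intro t ht
  obtain ⟨m, rfl⟩ := Nat.exists_eq_add_of_le' hn
  set F : ℝ[X] := ∏ i, (X - C (a i))
  have hF : (fun u => ∏ i, (u - a i)) = fun u => F.eval u := by ext u; simp [F, eval_prod]
  have hdeg : F.natDegree ≤ m + 1 := by simp [F]
  have hroot (i : Fin (m + 1)) : F.eval (a i) = 0 := by
    simp only [F, eval_prod, eval_sub, eval_X, eval_C]
    exact prod_eq_zero (mem_univ i) (sub_self _)
  have hsmooth (i : Fin (m + 1)) :
      ContDiffAt ℝ (m + 1 : ℕ) (fun u => ξ i * (ε i * (u - a i)) ^ (-(1/2) : ℝ)) t :=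
    contDiffAt_const.mul <|
      (by fun_prop : ContDiffAt ℝ _ (fun u => ε i * (u - a i)) t).rpow_const_of_ne (hΔ i t ht).ne'
  have hlead := coeff_taylor_prod_X_sub_C_card univ a t
  have hnext := coeff_taylor_prod_X_sub_C_card_pred univ a t (by simp)
  simp only [card_univ, Fintype.card_fin, Nat.add_sub_cancel] at hlead hnext
  rw [hF, Op_fun_add (by fun_prop) (ContDiffAt.sum fun i _ => hsmooth i),
    Op_fun_sum _ fun i _ => hsmooth i, Op_polynomial_eval_const_mul_id, hlead, hnext]
  simp only [Op_const_mul,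
    Op_polynomial_eval_rpow_neg_half_eq_zero_of_root hdeg (hroot _) (hΔ _ t ht), mul_zero,
    sum_const_zero, add_zero]
  push_cast
  ring

/-- For distinct reals `a₁,…,a_n` (`n ≥ 1`), signs `εᵢ ∈ {±1}`,
`Δᵢ(a) = εᵢ(a-aᵢ)` positive on the open interval `I`, `F̂(a) = ∏ᵢ (a-aᵢ)` and
`x(a) = (ν/2) a + ∑ᵢ ξᵢ Δᵢ(a)^{-1/2}`, one has
`(Op_n[F̂]x)(a) = (n + 1/2) ν a − ν σ₁` on `I`, with `σ₁ = ∑ᵢ aᵢ`; in particular `x` solves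
the weakly inhomogeneous linear ODE `Op_n[F̂]x = (n + 1/2)ν a + β` with `β = −ν σ₁`. -/
theorem stmt18 (n : ℕ) (hn : 1 ≤ n) (a : Fin n → ℝ) (ha : Function.Injective a)
    (ε : Fin n → ℝ) (hε : ∀ i, ε i = 1 ∨ ε i = -1)
    (I : Set ℝ) (hIopen : IsOpen I) (hIconn : I.OrdConnected)
    (hΔ : ∀ i, ∀ t ∈ I, 0 < ε i * (t - a i))
    (ν : ℝ) (ξ : Fin n → ℝ) :
    ∀ t ∈ I,
      Op n (fun u => ∏ i, (u - a i))
        (fun u => ν / 2 * u + ∑ i, ξ i * (ε i * (u - a i)) ^ (-(1/2) : ℝ)) t =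
      ((n : ℝ) + 1/2) * ν * t - ν * ∑ i, a i :=
  stmt18_general n hn a ε I hΔ ν ξ
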